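/- If b ∈ (0,1) and b ≠ 1/2, then there exists A > 0 such that for every a > A the map f_{a,b} has a periodic point of least period 3: there exists x ∈ (0,1) with f_{a,b}³(x) = x and f_{a,b}(x) ≠ x. -/

import Mathlib

/-!
Assume `b < 1/2`; the case `b > 1/2` is its mirror image under `x ↦ 1 - x`, because
`Ψ(1 - x) = -Ψ(x)`. Put `s = b/2` and `m = b + 1/2`. Since `Ψ(f x) - Ψ(x) = a (x - b)`, for large
`a` the map sends `m` and `f m` below `s` and `s` above `m`, while `f b = b` gives some `j ∈ (b, m)`
with `f j > s`. By the intermediate value theorem the intervals `J = [j, m]`, `K = [f m, s]` and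
`L = [s, m]` satisfy `f(J) ⊇ K`, `f(K) ⊇ L`, `f(L) ⊇ J`, so `f³(J) ⊇ J` and `f³` has a fixed point
in `J`. It is not fixed by `f`, since `f x < x` for every `x > b`.
-/

open Set Function

theorem exists_mem_Icc_isPeriodicPt_three_of_surjOn {α : Type*}
    [ConditionallyCompleteLinearOrder α] [TopologicalSpace α] [OrderTopology α] [DenselyOrdered α]
    {f : α → α} {s K L : Set α} {p q : α} (hf : ContinuousOn f s) (hmaps : MapsTo f s s)
    (hs : Icc p q ⊆ s) (hpq : p ≤ q) (hK : SurjOn f (Icc p q) K) (hL : SurjOn f K L)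
    (hJ : SurjOn f L (Icc p q)) : ∃ c ∈ Icc p q, IsPeriodicPt f 3 c :=
  exists_mem_Icc_isFixedPt_of_surjOn ((hf.iterate hmaps 3).mono hs) hpq (hJ.comp (hL.comp hK))

theorem StrictAnti.continuous_of_isOpen_range {α β : Type*} [LinearOrder α] [TopologicalSpace α]
    [OrderTopology α] [LinearOrder β] [TopologicalSpace β] [OrderTopology β] [DenselyOrdered β]
    {g : α → β} (hg : StrictAnti g) (hrange : IsOpen (range g)) : Continuous g :=
  continuous_iff_continuousAt.2 fun x =>
    StrictMonoOn.continuousAt_of_image_mem_nhds (β := βᵒᵈ) (hg.dual_right.strictMonoOn univ)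
      Filter.univ_mem (image_univ.symm ▸ hrange.mem_nhds (mem_range_self x))

theorem continuous_of_strictAntiOn_of_rightInverse {Ψ Ψinv : ℝ → ℝ} {s : Set ℝ} (hs : IsOpen s)
    (hΨ : StrictAntiOn Ψ s) (hinv1 : ∀ x ∈ s, Ψinv (Ψ x) = x)
    (hinv2 : ∀ y, Ψinv y ∈ s ∧ Ψ (Ψinv y) = y) : Continuous Ψinv := by
  have hanti : StrictAnti Ψinv := fun y₁ y₂ h => by
    rwa [← hΨ.lt_iff_gt (hinv2 y₁).1 (hinv2 y₂).1, (hinv2 y₁).2, (hinv2 y₂).2]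
  have hrange : range Ψinv = s :=
    Subset.antisymm (range_subset_iff.2 fun y => (hinv2 y).1) fun x hx => ⟨Ψ x, hinv1 x hx⟩
  exact hanti.continuous_of_isOpen_range (hrange ▸ hs)

-- `f_{a,b}` on `(0,1)`, described through `Ψ ∘ f` so that `Ψ⁻¹` does not appear.
structure IsFoReLMap (Ψ f : ℝ → ℝ) (a b : ℝ) : Prop where
  mapsTo : MapsTo f (Ioo 0 1) (Ioo 0 1)
  continuousOn : ContinuousOn f (Ioo 0 1)
  Ψ_apply : ∀ x ∈ Ioo 0 1, Ψ (f x) = Ψ x + a * (x - b)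

-- Large enough for `f` to send `b + 1/2` and its image below `b/2`, and `b/2` above `b + 1/2`.
noncomputable def periodThreeThreshold (Ψ : ℝ → ℝ) (b : ℝ) : ℝ :=
  max ((Ψ (b / 2) - Ψ (b + 1 / 2)) / (b / 2)) ((Ψ (b / 2) - Ψ (b + 1 / 2)) / (1 / 2 - b))

theorem periodThreeThreshold_pos {Ψ : ℝ → ℝ} (hΨ : StrictAntiOn Ψ (Ioo 0 1)) {b : ℝ}
    (hb0 : 0 < b) (hb : b < 1 / 2) : 0 < periodThreeThreshold Ψ b :=
  lt_max_of_lt_left <| div_pos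
    (sub_pos.2 (hΨ ⟨by linarith, by linarith⟩ ⟨by linarith, by linarith⟩ (by linarith)))
    (by linarith)

theorem periodThreeThreshold_lt_iff {Ψ : ℝ → ℝ} {a b : ℝ} (hb0 : 0 < b) (hb : b < 1 / 2) :
    periodThreeThreshold Ψ b < a ↔
      Ψ (b / 2) - Ψ (b + 1 / 2) < b / 2 * a ∧ Ψ (b / 2) - Ψ (b + 1 / 2) < (1 / 2 - b) * a := by
  rw [periodThreeThreshold, max_lt_iff, div_lt_iff₀' (by linarith), div_lt_iff₀' (by linarith)]

theorem ContinuousAt.exists_mem_Ioo_lt_apply {α β : Type*} [LinearOrder α] [TopologicalSpace α]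
    [OrderTopology α] [DenselyOrdered α] [NoMaxOrder α] [LinearOrder β] [TopologicalSpace β]
    [OrderTopology β] {f : α → β} {b m : α} {s : β} (hf : ContinuousAt f b) (hs : s < f b)
    (hbm : b < m) : ∃ j ∈ Ioo b m, s < f j :=
  (((hf.eventually (lt_mem_nhds hs)).filter_mono nhdsWithin_le_nhds).and
    (Ioo_mem_nhdsGT hbm)).exists.imp fun _ h => ⟨h.2, h.1⟩

namespace IsFoReLMap

variable {Ψ f : ℝ → ℝ} {a b : ℝ}

theorem of_eq_inv {Ψinv : ℝ → ℝ} (hΨ : ContinuousOn Ψ (Ioo 0 1)) (hΨinv : Continuous Ψinv)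
    (hinv : ∀ y, Ψinv y ∈ Ioo (0 : ℝ) 1 ∧ Ψ (Ψinv y) = y)
    (hf : ∀ x ∈ Ioo (0 : ℝ) 1, f x = Ψinv (Ψ x + a * (x - b))) : IsFoReLMap Ψ f a b where
  mapsTo x hx := hf x hx ▸ (hinv _).1
  continuousOn :=
    (hΨinv.comp_continuousOn (hΨ.add (by fun_prop))).congr hf
  Ψ_apply x hx := by rw [hf x hx, (hinv _).2]

theorem conj_one_sub (hsym : ∀ x ∈ Ioo (0 : ℝ) 1, Ψ (1 - x) = -Ψ x) (hf : IsFoReLMap Ψ f a b) :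
    IsFoReLMap Ψ (fun x => 1 - f (1 - x)) a (1 - b) := by
  have one_sub_mem : ∀ {x : ℝ}, x ∈ Ioo (0 : ℝ) 1 → 1 - x ∈ Ioo (0 : ℝ) 1 := fun hx =>
    ⟨by linarith [hx.2], by linarith [hx.1]⟩
  refine ⟨fun x hx => one_sub_mem (hf.mapsTo (one_sub_mem hx)), ?_, fun x hx => ?_⟩
  · exact continuousOn_const.sub
      (hf.continuousOn.comp (by fun_prop) fun x hx => one_sub_mem hx)
  · rw [hsym _ (hf.mapsTo (one_sub_mem hx)), hf.Ψ_apply _ (one_sub_mem hx), hsym x hx]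
    ring

theorem lt_self (hΨ : StrictAntiOn Ψ (Ioo 0 1)) (hf : IsFoReLMap Ψ f a b) (ha : 0 < a)
    {x : ℝ} (hx : x ∈ Ioo (0 : ℝ) 1) (hbx : b < x) : f x < x := by
  rw [← hΨ.lt_iff_gt hx (hf.mapsTo hx), hf.Ψ_apply x hx]
  nlinarith

theorem isFixedPt (hΨ : StrictAntiOn Ψ (Ioo 0 1)) (hf : IsFoReLMap Ψ f a b)
    (hb : b ∈ Ioo (0 : ℝ) 1) : IsFixedPt f b :=
  hΨ.injOn (hf.mapsTo hb) hb (by rw [hf.Ψ_apply b hb, sub_self, mul_zero, add_zero])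

theorem exists_isPeriodicPt_three_of_lt_half (hΨ : StrictAntiOn Ψ (Ioo 0 1))
    (hf : IsFoReLMap Ψ f a b) (hb0 : 0 < b) (hb : b < 1 / 2) (ha : periodThreeThreshold Ψ b < a) :
    ∃ x ∈ Ioo (0 : ℝ) 1, IsPeriodicPt f 3 x ∧ ¬IsFixedPt f x := by
  have ha0 : 0 < a := (periodThreeThreshold_pos hΨ hb0 hb).trans ha
  obtain ⟨hgap_s, hgap_m⟩ := (periodThreeThreshold_lt_iff hb0 hb).1 ha
  set s := b / 2 with hs_def
  set m := b + 1 / 2 with hm_def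
  have hs : s ∈ Ioo (0 : ℝ) 1 := ⟨by positivity, by linarith⟩
  have hm : m ∈ Ioo (0 : ℝ) 1 := ⟨by linarith, by linarith⟩
  have hbI : b ∈ Ioo (0 : ℝ) 1 := ⟨hb0, by linarith⟩
  have lt_of_Ψ_lt : ∀ {x y : ℝ}, x ∈ Ioo (0 : ℝ) 1 → y ∈ Ioo (0 : ℝ) 1 → Ψ y < Ψ x → x < y :=
    fun hx hy => (hΨ.lt_iff_gt hy hx).1
  have hfm_mem := hf.mapsTo hm
  have hfm : f m < s := lt_of_Ψ_lt hfm_mem hs (by rw [hf.Ψ_apply m hm]; nlinarith)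
  have hffm : f (f m) < s := lt_of_Ψ_lt (hf.mapsTo hfm_mem) hs (by
    rw [hf.Ψ_apply _ hfm_mem, hf.Ψ_apply m hm]; nlinarith [mul_pos ha0 hfm_mem.1])
  have hfs : m < f s := lt_of_Ψ_lt hm (hf.mapsTo hs) (by rw [hf.Ψ_apply s hs]; nlinarith)
  obtain ⟨j, hj, hfj⟩ :=
    (hf.continuousOn.continuousAt (isOpen_Ioo.mem_nhds hbI)).exists_mem_Ioo_lt_apply
      ((hf.isFixedPt hΨ hbI).symm ▸ (by linarith : s < b)) (by linarith : b < m)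
  have hJ : Icc j m ⊆ Ioo 0 1 := Icc_subset_Ioo (hb0.trans hj.1) hm.2
  have hK : Icc (f m) s ⊆ Ioo 0 1 := Icc_subset_Ioo hfm_mem.1 hs.2
  have hL : Icc s m ⊆ Ioo 0 1 := Icc_subset_Ioo hs.1 hm.2
  obtain ⟨x, hx, hper⟩ := exists_mem_Icc_isPeriodicPt_three_of_surjOn hf.continuousOn hf.mapsTo
    hJ hj.2.le
    ((Icc_subset_Icc_right hfj.le).trans
      (intermediate_value_Icc' hj.2.le (hf.continuousOn.mono hJ)))
    ((Icc_subset_Icc hffm.le hfs.le).trans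
      (intermediate_value_Icc hfm.le (hf.continuousOn.mono hK)))
    ((Icc_subset_Icc (by linarith [hj.1]) hfs.le).trans
      (intermediate_value_Icc' (by linarith) (hf.continuousOn.mono hL)))
  exact ⟨x, hJ hx, hper, (hf.lt_self hΨ ha0 (hJ hx) (hj.1.trans_le hx.1)).ne⟩

theorem exists_isPeriodicPt_three_of_half_lt (hΨ : StrictAntiOn Ψ (Ioo 0 1))
    (hsym : ∀ x ∈ Ioo (0 : ℝ) 1, Ψ (1 - x) = -Ψ x) (hf : IsFoReLMap Ψ f a b) (hb1 : b < 1)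
    (hb : 1 / 2 < b) (ha : periodThreeThreshold Ψ (1 - b) < a) :
    ∃ x ∈ Ioo (0 : ℝ) 1, IsPeriodicPt f 3 x ∧ ¬IsFixedPt f x := by
  obtain ⟨x, hx, hper, hfix⟩ :=
    (hf.conj_one_sub hsym).exists_isPeriodicPt_three_of_lt_half hΨ (by linarith) (by linarith) ha
  refine ⟨1 - x, ⟨by linarith [hx.2], by linarith [hx.1]⟩,
    hper.map (g := fun x => 1 - x) fun y => sub_sub_cancel 1 _, fun hfx => hfix ?_⟩
  change 1 - f (1 - x) = x
  rw [hfx, sub_sub_cancel]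

end IsFoReLMap

theorem stmt13_general
    (Ψ Ψinv : ℝ → ℝ)
    (hΨcont : ContinuousOn Ψ (Set.Ioo 0 1))
    (hΨanti : StrictAntiOn Ψ (Set.Ioo 0 1))
    (hΨsym : ∀ x ∈ Set.Ioo (0:ℝ) 1, Ψ (1 - x) = -Ψ x)
    (hinv1 : ∀ x ∈ Set.Ioo (0:ℝ) 1, Ψinv (Ψ x) = x)
    (hinv2 : ∀ y : ℝ, Ψinv y ∈ Set.Ioo (0:ℝ) 1 ∧ Ψ (Ψinv y) = y)
    (b : ℝ) (hb : b ∈ Set.Ioo (0:ℝ) 1) (hbne : b ≠ 1/2) :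
    ∃ A > (0:ℝ), ∀ a > A, ∀ f : ℝ → ℝ, f 0 = 0 → f 1 = 1 →
      (∀ x ∈ Set.Ioo (0:ℝ) 1, f x = Ψinv (Ψ x + a * (x - b))) →
      ∃ x ∈ Set.Ioo (0:ℝ) 1, f^[3] x = x ∧ f x ≠ x := by
  have hΨinv : Continuous Ψinv :=
    continuous_of_strictAntiOn_of_rightInverse isOpen_Ioo hΨanti hinv1 hinv2
  rcases lt_or_gt_of_ne hbne with hb_lt | hb_gt
  · refine ⟨periodThreeThreshold Ψ b, periodThreeThreshold_pos hΨanti hb.1 hb_lt,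
      fun a ha f _ _ hf => ?_⟩
    exact (IsFoReLMap.of_eq_inv hΨcont hΨinv hinv2 hf).exists_isPeriodicPt_three_of_lt_half
      hΨanti hb.1 hb_lt ha
  · refine ⟨periodThreeThreshold Ψ (1 - b),
      periodThreeThreshold_pos hΨanti (by linarith [hb.2]) (by linarith), fun a ha f _ _ hf => ?_⟩
    exact (IsFoReLMap.of_eq_inv hΨcont hΨinv hinv2 hf).exists_isPeriodicPt_three_of_half_lt
      hΨanti hΨsym hb.2 hb_gt ha

theorem stmt13
    (Ψ Ψinv : ℝ → ℝ)
    (hΨcont : ContinuousOn Ψ (Set.Ioo 0 1))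
    (hΨanti : StrictAntiOn Ψ (Set.Ioo 0 1))
    (hΨbij : Set.BijOn Ψ (Set.Ioo 0 1) Set.univ)
    (hΨsym : ∀ x ∈ Set.Ioo (0:ℝ) 1, Ψ (1 - x) = -Ψ x)
    (hinv1 : ∀ x ∈ Set.Ioo (0:ℝ) 1, Ψinv (Ψ x) = x)
    (hinv2 : ∀ y : ℝ, Ψinv y ∈ Set.Ioo (0:ℝ) 1 ∧ Ψ (Ψinv y) = y)
    (b : ℝ) (hb : b ∈ Set.Ioo (0:ℝ) 1) (hbne : b ≠ 1/2) :
    ∃ A > (0:ℝ), ∀ a > A, ∀ f : ℝ → ℝ, f 0 = 0 → f 1 = 1 →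
      (∀ x ∈ Set.Ioo (0:ℝ) 1, f x = Ψinv (Ψ x + a * (x - b))) →
      ∃ x ∈ Set.Ioo (0:ℝ) 1, f^[3] x = x ∧ f x ≠ x :=
  stmt13_general Ψ Ψinv hΨcont hΨanti hΨsym hinv1 hinv2 b hb hbne
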